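/- arXiv:2303.00140 — 3 statements merged into one kernel-verified Lean document; each statement's English description precedes it below -/
import Mathlib

section
/- Let q, a, b, λ, β, D be real numbers with q ≥ 1, a ≥ 1, b > 0, λ > 0, β > 0, D > 0, and set r = a + b; assume r ≥ q. Let φ, k, M : ℝ → ℝ be functions such that for all sufficiently large p one has φ(p) > 0, k(p) > 0, M(p) > 0 and λ·φ(p)^(q−1)·(φ(p)/M(p))^(p−q) + β·φ(p)^(a−1)·k(p)^b·(φ(p)/M(p))^(p−r) = 1/2. If φ(p) → D and k(p) → 1 as p → +∞, then φ(p)/M(p) → 1 and M(p) → D as p → +∞. -/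
/-!
Write `x = φ / M`. For large `p` the coefficients of the two terms are bounded, the first one away
from zero. If `x > 1`, dropping the nonnegative second term bounds `x ^ (p - q)` by a constant; if
`x < 1`, then `x ^ (p - q) ≤ x ^ (p - r)` because `q ≤ r`, which bounds `x ^ (p - r)` below by a
positive constant. Taking `(p - q)`-th and `(p - r)`-th roots squeezes `x` to `1`, and then
`M = φ / x → D`.
-/

open Filter Real Topology

theorem tendsto_rpow_inv_sub_atTop {C : ℝ} (hC : 0 < C) (s : ℝ) :
    Tendsto (fun p : ℝ => C ^ (p - s)⁻¹) atTop (𝓝 1) := by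
  have hinv : Tendsto (fun p : ℝ => (p - s)⁻¹) atTop (𝓝 0) :=
    tendsto_inv_atTop_zero.comp (tendsto_atTop_add_const_right _ (-s) tendsto_id)
  simpa using tendsto_const_nhds.rpow hinv (Or.inl hC.ne')

theorem tendsto_one_of_rpow_sub_bounds {x : ℝ → ℝ} {s t c C : ℝ} (hc : 0 < c) (hC : 0 < C)
    (hpos : ∀ᶠ p in atTop, 0 < x p)
    (hupper : ∀ᶠ p in atTop, 1 < x p → x p ^ (p - s) ≤ C)
    (hlower : ∀ᶠ p in atTop, x p < 1 → c ≤ x p ^ (p - t)) :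
    Tendsto x atTop (𝓝 1) := by
  have hmin : Tendsto (fun p : ℝ => min 1 (c ^ (p - t)⁻¹)) atTop (𝓝 1) := by
    simpa using (tendsto_const_nhds (x := (1 : ℝ))).min (tendsto_rpow_inv_sub_atTop hc t)
  have hmax : Tendsto (fun p : ℝ => max 1 (C ^ (p - s)⁻¹)) atTop (𝓝 1) := by
    simpa using (tendsto_const_nhds (x := (1 : ℝ))).max (tendsto_rpow_inv_sub_atTop hC s)
  refine tendsto_of_tendsto_of_tendsto_of_le_of_le' hmin hmax ?_ ?_
  · filter_upwards [hpos, hlower, eventually_gt_atTop t] with p hxp hlow hpt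
    rcases le_or_gt 1 (x p) with h1 | h1
    · exact min_le_of_left_le h1
    · refine min_le_of_right_le ?_
      exact (rpow_inv_le_iff_of_pos hc.le hxp.le (sub_pos.2 hpt)).2 (hlow h1)
  · filter_upwards [hpos, hupper, eventually_gt_atTop s] with p hxp hup hps
    rcases le_or_gt (x p) 1 with h1 | h1
    · exact le_max_of_le_left h1
    · refine le_max_of_le_right ?_
      exact (le_rpow_inv_iff_of_pos hxp.le hC.le (sub_pos.2 hps)).2 (hup h1)

theorem tendsto_one_of_add_rpow_sub_eq {A B x : ℝ → ℝ} {s t e LA LB : ℝ} (hst : s ≤ t)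
    (he : 0 < e) (hA : Tendsto A atTop (𝓝 LA)) (hLA : 0 < LA) (hB : Tendsto B atTop (𝓝 LB))
    (hB0 : ∀ᶠ p in atTop, 0 ≤ B p) (hpos : ∀ᶠ p in atTop, 0 < x p)
    (heq : ∀ᶠ p in atTop, A p * x p ^ (p - s) + B p * x p ^ (p - t) = e) :
    Tendsto x atTop (𝓝 1) := by
  have hLB : 0 ≤ LB := ge_of_tendsto hB hB0
  have hAlow : ∀ᶠ p in atTop, LA / 2 < A p := hA.eventually (lt_mem_nhds (by linarith))
  have hABhigh : ∀ᶠ p in atTop, A p + B p < LA + LB + 1 :=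
    (hA.add hB).eventually (gt_mem_nhds (by linarith))
  refine tendsto_one_of_rpow_sub_bounds (s := s) (t := t) (c := e / (LA + LB + 1))
    (C := e / (LA / 2)) (by positivity) (by positivity) hpos ?_ ?_
  · filter_upwards [hAlow, hB0, hpos, heq] with p hAp hBp hxp hep _
    rw [le_div_iff₀ (by positivity)]
    have hBterm : 0 ≤ B p * x p ^ (p - t) := by positivity
    nlinarith [rpow_pos_of_pos hxp (p - s)]
  · filter_upwards [hAlow, hABhigh, hpos, heq] with p hAp hABp hxp hep h1
    rw [div_le_iff₀ (by positivity)]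
    have hmono : x p ^ (p - s) ≤ x p ^ (p - t) :=
      rpow_le_rpow_of_exponent_ge hxp h1.le (by linarith)
    have hxt : 0 < x p ^ (p - t) := rpow_pos_of_pos hxp _
    calc e = A p * x p ^ (p - s) + B p * x p ^ (p - t) := hep.symm
      _ ≤ (A p + B p) * x p ^ (p - t) := by nlinarith
      _ ≤ x p ^ (p - t) * (LA + LB + 1) := by nlinarith

theorem stmt_7_general (q a b lam β D : ℝ)
    (hlam : 0 < lam) (hβ : 0 < β) (hD : 0 < D) (hr : q ≤ a + b)
    (φ k M : ℝ → ℝ)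
    (hEq : ∀ᶠ p in Filter.atTop, 0 < φ p ∧ 0 < k p ∧ 0 < M p ∧
      lam * (φ p) ^ (q - 1) * (φ p / M p) ^ (p - q) +
        β * (φ p) ^ (a - 1) * (k p) ^ b * (φ p / M p) ^ (p - (a + b)) = 1 / 2)
    (hφ : Filter.Tendsto φ Filter.atTop (nhds D))
    (hk : Filter.Tendsto k Filter.atTop (nhds 1)) :
    Filter.Tendsto (fun p => φ p / M p) Filter.atTop (nhds 1) ∧
      Filter.Tendsto M Filter.atTop (nhds D) := by
  have hA : Tendsto (fun p => lam * φ p ^ (q - 1)) atTop (𝓝 (lam * D ^ (q - 1))) :=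
    (hφ.rpow_const (Or.inl hD.ne')).const_mul lam
  have hB : Tendsto (fun p => β * φ p ^ (a - 1) * k p ^ b) atTop (𝓝 (β * D ^ (a - 1))) := by
    simpa using ((hφ.rpow_const (Or.inl hD.ne')).const_mul β).mul
      (hk.rpow_const (Or.inl one_ne_zero))
  have hx : Tendsto (fun p => φ p / M p) atTop (𝓝 1) := by
    refine tendsto_one_of_add_rpow_sub_eq hr one_half_pos hA (by positivity) hB ?_ ?_
      (hEq.mono fun p hp => hp.2.2.2)
    · filter_upwards [hEq] with p ⟨hφp, hkp, _⟩
      positivity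
    · filter_upwards [hEq] with p ⟨hφp, _, hMp, _⟩
      positivity
  refine ⟨hx, ?_⟩
  have hM : ∀ᶠ p in atTop, φ p / (φ p / M p) = M p := by
    filter_upwards [hEq] with p ⟨hφp, _⟩
    field_simp
  simpa using (hφ.div hx one_ne_zero).congr' hM

/-- Abstract form of Lemma 4.5 (first conclusions): if for large `p`,
`λ·φ(p)^(q−1)·(φ(p)/M(p))^(p−q) + β·φ(p)^(a−1)·k(p)^b·(φ(p)/M(p))^(p−(a+b)) = 1/2`
with `φ(p) → D > 0` and `k(p) → 1`, then `φ(p)/M(p) → 1` and `M(p) → D`. -/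
theorem stmt_7 (q a b lam β D : ℝ) (hq : 1 ≤ q) (ha : 1 ≤ a) (hb : 0 < b)
    (hlam : 0 < lam) (hβ : 0 < β) (hD : 0 < D) (hr : q ≤ a + b)
    (φ k M : ℝ → ℝ)
    (hEq : ∀ᶠ p in Filter.atTop, 0 < φ p ∧ 0 < k p ∧ 0 < M p ∧
      lam * (φ p) ^ (q - 1) * (φ p / M p) ^ (p - q) +
        β * (φ p) ^ (a - 1) * (k p) ^ b * (φ p / M p) ^ (p - (a + b)) = 1 / 2)
    (hφ : Filter.Tendsto φ Filter.atTop (nhds D))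
    (hk : Filter.Tendsto k Filter.atTop (nhds 1)) :
    Filter.Tendsto (fun p => φ p / M p) Filter.atTop (nhds 1) ∧
      Filter.Tendsto M Filter.atTop (nhds D) :=
  stmt_7_general q a b lam β D hlam hβ hD hr φ k M hEq hφ hk
end

section
/- Let q, a, b, λ, β, D be real numbers with q ≥ 1, a ≥ 1, b > 0, λ > 0, β > 0, D > 0, and set r = a + b; assume r ≥ q. Let φ, k, M : ℝ → ℝ be functions such that for all sufficiently large p one has φ(p) > 0, k(p) > 0, M(p) > 0 and λ·φ(p)^(q−1)·(φ(p)/M(p))^(p−q) + β·φ(p)^(a−1)·k(p)^b·(φ(p)/M(p))^(p−r) = 1/2. If φ(p) → D and k(p) → 1 as p → +∞, then (φ(p)/M(p))^p → 1/(2·(λ·D^(q−1) + β·D^(a−1))) as p → +∞. -/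
/-!
Put `t = φ / M`. The coefficients `λ φ^(q-1)` and `β φ^(a-1) k^b` of the identity converge to
positive limits, so for each large `p` one of the two terms carries at least half of `1/2`, which
traps `t^(p-q)` or `t^(p-r)` in a fixed compact subinterval of `(0, ∞)`; taking roots gives
`t → 1`. Factoring out `t^p` then yields
`t^p = (1/2) / (λ φ^(q-1) t^(-q) + β φ^(a-1) k^b t^(-r))`, whose denominator tends to
`λ D^(q-1) + β D^(a-1)`.
-/

open Filter Topology Set

theorem Real.tendsto_one_of_rpow_mem_Icc {ι : Type*} {l : Filter ι} {t e : ι → ℝ} {c C : ℝ}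
    (hc : 0 < c) (hC : 0 < C) (he : Tendsto e l atTop)
    (h : ∀ᶠ x in l, 0 < t x ∧ t x ^ e x ∈ Icc c C) : Tendsto t l (𝓝 1) := by
  have root_tendsto_one : ∀ {s : ℝ}, 0 < s → Tendsto (fun x => s ^ (e x)⁻¹) l (𝓝 1) :=
    fun hs => by
      simpa using tendsto_const_nhds.rpow (tendsto_inv_atTop_zero.comp he) (Or.inl hs.ne')
  refine tendsto_of_tendsto_of_tendsto_of_le_of_le' (root_tendsto_one hc) (root_tendsto_one hC)
    ?_ ?_ <;>
  filter_upwards [h, he.eventually_gt_atTop 0] with x ⟨ht, hlo, hhi⟩ hex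
  · exact (Real.rpow_inv_le_iff_of_pos hc.le ht.le hex).2 hlo
  · exact (Real.le_rpow_inv_iff_of_pos ht.le hC.le hex).2 hhi

theorem mem_Icc_div_of_mul_mem_Icc {w y m K L : ℝ} (hm : 0 < m) (hL : 0 ≤ L)
    (hw : w ∈ Icc m K) (hwy : w * y ∈ Icc (L / 2) L) : y ∈ Icc (L / (2 * K)) (L / m) := by
  obtain ⟨hmw, hwK⟩ := hw
  have hw0 : 0 < w := hm.trans_le hmw
  rw [show y = w * y / w by field_simp, ← div_div]
  exact ⟨div_le_div₀ (by linarith [hwy.1]) hwy.1 hw0 hwK, div_le_div₀ hL hwy.2 hm hmw⟩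

theorem tendsto_one_of_add_rpow_sub_eq_s8 {α γ t : ℝ → ℝ} {A B L q r : ℝ}
    (hA : 0 < A) (hB : 0 < B) (hL : 0 < L)
    (hα : Tendsto α atTop (𝓝 A)) (hγ : Tendsto γ atTop (𝓝 B))
    (h : ∀ᶠ p in atTop, 0 < t p ∧ α p * t p ^ (p - q) + γ p * t p ^ (p - r) = L) :
    Tendsto t atTop (𝓝 1) := by
  obtain ⟨m, hm, hmA, hmB⟩ : ∃ m : ℝ, 0 < m ∧ m < A ∧ m < B :=
    ⟨min A B / 2, by positivity, by linarith [min_le_left A B], by linarith [min_le_right A B]⟩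
  have hαK : ∀ᶠ p in atTop, α p ∈ Icc m (A + B) :=
    hα.eventually <| Icc_mem_nhds hmA (by linarith)
  have hγK : ∀ᶠ p in atTop, γ p ∈ Icc m (A + B) :=
    hγ.eventually <| Icc_mem_nhds hmB (by linarith)
  -- follow the exponent of a term that carries at least half of `L`
  let e : ℝ → ℝ := fun p => if L / 2 ≤ α p * t p ^ (p - q) then p - q else p - r
  have he : Tendsto e atTop atTop := by
    refine tendsto_atTop_mono (fun p => ?_) (tendsto_atTop_add_const_right _ (-max q r) tendsto_id)
    simp only [e, id]
    split_ifs <;> linarith [le_max_left q r, le_max_right q r]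
  refine Real.tendsto_one_of_rpow_mem_Icc (c := L / (2 * (A + B))) (C := L / m)
    (by positivity) (by positivity) he ?_
  filter_upwards [h, hαK, hγK] with p ⟨ht, hsum⟩ hαp hγp
  have hX : 0 < α p * t p ^ (p - q) := mul_pos (hm.trans_le hαp.1) (Real.rpow_pos_of_pos ht _)
  have hY : 0 < γ p * t p ^ (p - r) := mul_pos (hm.trans_le hγp.1) (Real.rpow_pos_of_pos ht _)
  refine ⟨ht, ?_⟩
  simp only [e]
  split_ifs with hhalf
  · exact mem_Icc_div_of_mul_mem_Icc hm hL.le hαp ⟨hhalf, by linarith⟩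
  · exact mem_Icc_div_of_mul_mem_Icc hm hL.le hγp ⟨by linarith, by linarith⟩

theorem tendsto_rpow_of_add_rpow_sub_eq {α γ t : ℝ → ℝ} {A B L q r : ℝ}
    (hA : 0 < A) (hB : 0 < B) (hL : 0 < L)
    (hα : Tendsto α atTop (𝓝 A)) (hγ : Tendsto γ atTop (𝓝 B))
    (h : ∀ᶠ p in atTop, 0 < t p ∧ α p * t p ^ (p - q) + γ p * t p ^ (p - r) = L) :
    Tendsto (fun p => t p ^ p) atTop (𝓝 (L / (A + B))) := by
  have ht := tendsto_one_of_add_rpow_sub_eq_s8 hA hB hL hα hγ h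
  have hS : Tendsto (fun p => α p * t p ^ (-q) + γ p * t p ^ (-r)) atTop (𝓝 (A + B)) := by
    simpa using (hα.mul (ht.rpow_const (Or.inl one_ne_zero))).add
      (hγ.mul (ht.rpow_const (Or.inl one_ne_zero)))
  refine (tendsto_const_nhds.div hS (by positivity)).congr' ?_
  filter_upwards [h] with p ⟨htp, hsum⟩
  have hfactor : t p ^ p * (α p * t p ^ (-q) + γ p * t p ^ (-r)) = L := by
    rw [← hsum, sub_eq_add_neg, sub_eq_add_neg, Real.rpow_add htp, Real.rpow_add htp]
    ring
  exact (eq_div_of_mul_eq (right_ne_zero_of_mul (hfactor ▸ hL.ne')) hfactor).symm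

theorem stmt_8_general (q a b lam β D : ℝ)
    (hlam : 0 < lam) (hβ : 0 < β) (hD : 0 < D)
    (φ k M : ℝ → ℝ)
    (hEq : ∀ᶠ p in Filter.atTop, 0 < φ p ∧ 0 < k p ∧ 0 < M p ∧
      lam * (φ p) ^ (q - 1) * (φ p / M p) ^ (p - q) +
        β * (φ p) ^ (a - 1) * (k p) ^ b * (φ p / M p) ^ (p - (a + b)) = 1 / 2)
    (hφ : Filter.Tendsto φ Filter.atTop (nhds D))
    (hk : Filter.Tendsto k Filter.atTop (nhds 1)) :
    Filter.Tendsto (fun p => (φ p / M p) ^ p) Filter.atTop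
      (nhds (1 / (2 * (lam * D ^ (q - 1) + β * D ^ (a - 1))))) := by
  have hα : Tendsto (fun p => lam * φ p ^ (q - 1)) atTop (𝓝 (lam * D ^ (q - 1))) :=
    tendsto_const_nhds.mul (hφ.rpow_const (Or.inl hD.ne'))
  have hγ : Tendsto (fun p => β * φ p ^ (a - 1) * k p ^ b) atTop (𝓝 (β * D ^ (a - 1))) := by
    simpa using (tendsto_const_nhds.mul (hφ.rpow_const (Or.inl hD.ne'))).mul
      (hk.rpow_const (Or.inl one_ne_zero))
  rw [← div_div]
  exact tendsto_rpow_of_add_rpow_sub_eq (by positivity) (by positivity) one_half_pos hα hγ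
    (hEq.mono fun p ⟨hφp, _, hMp, hsum⟩ => ⟨div_pos hφp hMp, hsum⟩)

/-- Abstract form of Lemma 4.5 (second conclusion): under the same hypotheses,
`(φ(p)/M(p))^p → 1/(2·(λ·D^(q−1) + β·D^(a−1)))` as `p → +∞`. -/
theorem stmt_8 (q a b lam β D : ℝ) (hq : 1 ≤ q) (ha : 1 ≤ a) (hb : 0 < b)
    (hlam : 0 < lam) (hβ : 0 < β) (hD : 0 < D) (hr : q ≤ a + b)
    (φ k M : ℝ → ℝ)
    (hEq : ∀ᶠ p in Filter.atTop, 0 < φ p ∧ 0 < k p ∧ 0 < M p ∧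
      lam * (φ p) ^ (q - 1) * (φ p / M p) ^ (p - q) +
        β * (φ p) ^ (a - 1) * (k p) ^ b * (φ p / M p) ^ (p - (a + b)) = 1 / 2)
    (hφ : Filter.Tendsto φ Filter.atTop (nhds D))
    (hk : Filter.Tendsto k Filter.atTop (nhds 1)) :
    Filter.Tendsto (fun p => (φ p / M p) ^ p) Filter.atTop
      (nhds (1 / (2 * (lam * D ^ (q - 1) + β * D ^ (a - 1))))) :=
  stmt_8_general q a b lam β D hlam hβ hD φ k M hEq hφ hk
end

section
/- Let q, a, b, λ, β, D, l be real numbers with q ≥ 1, a ≥ 1, b > 0, λ > 0, β > 0, D > 0, l ≥ 1, and let α, s be nonnegative real numbers; set r = a + b and assume r ≥ q. Let φ, k, M : ℝ → ℝ be functions such that for all sufficiently large p one has φ(p) > 0, k(p) > 0, M(p) > 0 and λ·φ(p)^(q−1)·(φ(p)/M(p))^(p−q) + β·φ(p)^(a−1)·k(p)^b·(φ(p)/M(p))^(p−r) = 1/2, and assume φ(p) → D and k(p) → 1 as p → +∞. Define m(p) = M(p)^(p−l) / (2·φ(p)^(p−1)·e^(α·M(p)^s)). Then m(p) → (λ·D^(q−1)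 + β·D^(a−1))·D^(1−l)·e^(−α·D^s) as p → +∞. -/
/-!
Put `x = φ/M`. The constraint reads `A·x^(p-q) + B·x^(p-r) = 1/2` with coefficients
`A = λ·φ^(q-1)`, `B = β·φ^(a-1)·k^b` converging to positive limits. Taking `(p-q)`-th and
`(p-r)`-th roots squeezes `x` between two quantities of the form `C^(1/(p-e))` with `C` bounded
away from `0` and `∞`, so `x → 1` and hence `M → D`. Multiplying the constraint by
`M^(p-l)/φ^(p-1) = x^(l-p)·φ^(1-l)` gives `m = (A·x^(l-q) + B·x^(l-r))·φ^(1-l)·e^(-α M^s)`,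
whose limit can be read off.
-/

open Filter Topology Real

lemma tendsto_rpow_inv_sub_nhds_one {C : ℝ → ℝ} {L : ℝ} (e : ℝ) (hL : 0 < L)
    (hC : Tendsto C atTop (𝓝 L)) :
    Tendsto (fun p => C p ^ (p - e)⁻¹) atTop (𝓝 1) := by
  have hlog : Tendsto (fun p => log (C p) * (p - e)⁻¹) atTop (𝓝 0) := by
    have hinv : Tendsto (fun p : ℝ => (p - e)⁻¹) atTop (𝓝 0) :=
      tendsto_inv_atTop_zero.comp (tendsto_atTop_add_const_right _ (-e) tendsto_id)
    simpa using ((continuousAt_log hL.ne').tendsto.comp hC).mul hinv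
  have hexp := (continuous_exp.tendsto 0).comp hlog
  rw [Function.comp_def, exp_zero] at hexp
  refine hexp.congr' ?_
  filter_upwards [hC.eventually (eventually_gt_nhds hL)] with p hp
  rw [rpow_def_of_pos hp]

section TwoTermConstraint

variable {A B c x p q r : ℝ}

lemma le_rpow_inv_of_add_rpow_eq (hx : 0 < x) (hA : 0 < A) (hB : 0 ≤ B) (hp : q < p)
    (h : A * x ^ (p - q) + B * x ^ (p - r) = c) : x ≤ (c / A) ^ (p - q)⁻¹ := by
  have hxq : x ^ (p - q) ≤ c / A := by
    rw [le_div_iff₀ hA, ← h]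
    nlinarith [rpow_nonneg hx.le (p - r)]
  exact (le_rpow_inv_iff_of_pos hx.le (hxq.trans' (rpow_nonneg hx.le _)) (by linarith)).2 hxq

lemma min_one_rpow_inv_le_of_add_rpow_eq (hx : 0 < x) (hA : 0 ≤ A) (hB : 0 ≤ B)
    (hAB : 0 < A + B) (hqr : q ≤ r) (hp : r < p)
    (h : A * x ^ (p - q) + B * x ^ (p - r) = c) : min 1 ((c / (A + B)) ^ (p - r)⁻¹) ≤ x := by
  rcases le_or_gt 1 x with hx1 | hx1
  · exact min_le_of_left_le hx1
  refine min_le_of_right_le ?_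
  have hqr' : x ^ (p - q) ≤ x ^ (p - r) := rpow_le_rpow_of_exponent_ge hx hx1.le (by linarith)
  have hxr : c / (A + B) ≤ x ^ (p - r) := by
    rw [div_le_iff₀ hAB, ← h]
    nlinarith [mul_le_mul_of_nonneg_left hqr' hA]
  have hc : 0 ≤ c := h ▸ by positivity
  exact (rpow_inv_le_iff_of_pos (by positivity) hx.le (by linarith)).2 hxr

lemma tendsto_nhds_one_of_add_rpow_eq {A B x : ℝ → ℝ} {A₀ B₀ : ℝ}
    (hA : Tendsto A atTop (𝓝 A₀)) (hB : Tendsto B atTop (𝓝 B₀)) (hA₀ : 0 < A₀) (hc : 0 < c)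
    (hqr : q ≤ r)
    (h : ∀ᶠ p in atTop, 0 < x p ∧ 0 ≤ B p ∧ A p * x p ^ (p - q) + B p * x p ^ (p - r) = c) :
    Tendsto x atTop (𝓝 1) := by
  have hB₀ : 0 ≤ B₀ := ge_of_tendsto hB (h.mono fun _ hp => hp.2.1)
  have hlower : Tendsto (fun p => min 1 ((c / (A p + B p)) ^ (p - r)⁻¹)) atTop (𝓝 1) := by
    have hC : Tendsto (fun p => c / (A p + B p)) atTop (𝓝 (c / (A₀ + B₀))) :=
      tendsto_const_nhds.div (hA.add hB) (by positivity)
    simpa using (tendsto_const_nhds : Tendsto (fun _ => (1 : ℝ)) atTop (𝓝 1)).min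
      (tendsto_rpow_inv_sub_nhds_one r (by positivity) hC)
  have hupper : Tendsto (fun p => (c / A p) ^ (p - q)⁻¹) atTop (𝓝 1) :=
    tendsto_rpow_inv_sub_nhds_one q (by positivity) (tendsto_const_nhds.div hA hA₀.ne')
  have hApos : ∀ᶠ p in atTop, 0 < A p := hA.eventually (eventually_gt_nhds hA₀)
  have hlarge : ∀ᶠ p : ℝ in atTop, r < p := eventually_gt_atTop r
  refine tendsto_of_tendsto_of_tendsto_of_le_of_le' hlower hupper ?_ ?_
  · filter_upwards [h, hApos, hlarge] with p ⟨hx, hBp, hp⟩ hAp hrp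
    exact min_one_rpow_inv_le_of_add_rpow_eq hx hAp.le hBp (by linarith) hqr hrp hp
  · filter_upwards [h, hApos, hlarge] with p ⟨hx, hBp, hp⟩ hAp hrp
    exact le_rpow_inv_of_add_rpow_eq hx hAp hBp (by linarith) hp

end TwoTermConstraint

lemma rpow_div_rpow_mul_add_rpow {φ M : ℝ} (hφ : 0 < φ) (hM : 0 < M) (A B p q r l : ℝ) :
    M ^ (p - l) / φ ^ (p - 1) * (A * (φ / M) ^ (p - q) + B * (φ / M) ^ (p - r)) =
      (A * (φ / M) ^ (l - q) + B * (φ / M) ^ (l - r)) * φ ^ (1 - l) := by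
  have hx : 0 < φ / M := div_pos hφ hM
  have hratio : M ^ (p - l) / φ ^ (p - 1) = (φ / M) ^ (l - p) * φ ^ (1 - l) := by
    rw [div_rpow hφ.le hM.le, rpow_sub hφ, rpow_sub hφ, rpow_sub hφ, rpow_sub hM, rpow_sub hM]
    field_simp
  have hshift : ∀ e, (φ / M) ^ (l - p) * (φ / M) ^ (p - e) = (φ / M) ^ (l - e) := fun e => by
    rw [← rpow_add hx]; ring_nf
  rw [hratio]
  linear_combination A * φ ^ (1 - l) * hshift q + B * φ ^ (1 - l) * hshift r

theorem stmt_9_general (q a b lam β D l α s : ℝ)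
    (hlam : 0 < lam) (hβ : 0 < β) (hD : 0 < D) (hr : q ≤ a + b)
    (φ k M : ℝ → ℝ)
    (hEq : ∀ᶠ p in Filter.atTop, 0 < φ p ∧ 0 < k p ∧ 0 < M p ∧
      lam * (φ p) ^ (q - 1) * (φ p / M p) ^ (p - q) +
        β * (φ p) ^ (a - 1) * (k p) ^ b * (φ p / M p) ^ (p - (a + b)) = 1 / 2)
    (hφ : Filter.Tendsto φ Filter.atTop (nhds D))
    (hk : Filter.Tendsto k Filter.atTop (nhds 1)) :
    Filter.Tendsto
      (fun p => M p ^ (p - l) / (2 * φ p ^ (p - 1) * Real.exp (α * M p ^ s)))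
      Filter.atTop
      (nhds ((lam * D ^ (q - 1) + β * D ^ (a - 1)) * D ^ (1 - l) *
        Real.exp (-(α * D ^ s)))) := by
  have hφpow (e : ℝ) := hφ.rpow_const (p := e) (Or.inl hD.ne')
  have hA := (hφpow (q - 1)).const_mul lam
  have hB : Tendsto (fun p => β * φ p ^ (a - 1) * k p ^ b) atTop (𝓝 (β * D ^ (a - 1))) := by
    simpa using ((hφpow (a - 1)).const_mul β).mul (hk.rpow_const (p := b) (Or.inl one_ne_zero))
  have hx : Tendsto (fun p => φ p / M p) atTop (𝓝 1) :=
    tendsto_nhds_one_of_add_rpow_eq hA hB (by positivity) one_half_pos hr <| by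
      filter_upwards [hEq] with p ⟨hφp, hkp, hMp, hp⟩
      exact ⟨div_pos hφp hMp, by positivity, hp⟩
  have hM : Tendsto M atTop (𝓝 D) := by
    refine (div_one D ▸ hφ.div hx one_ne_zero).congr' ?_
    filter_upwards [hEq] with p ⟨hφp, _, hMp, _⟩
    simp only [Pi.div_apply]
    field_simp
  have hlim := (((hA.mul (hx.rpow_const (p := l - q) (Or.inl one_ne_zero))).add
    (hB.mul (hx.rpow_const (p := l - (a + b)) (Or.inl one_ne_zero)))).mul
    (hφpow (1 - l))).mul
    ((continuous_exp.tendsto _).comp (((hM.rpow_const (p := s) (Or.inl hD.ne')).const_mul α).neg))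
  simp only [one_rpow, mul_one] at hlim
  refine hlim.congr' ?_
  filter_upwards [hEq] with p ⟨hφp, _, hMp, hp⟩
  rw [Function.comp_apply, exp_neg, ← rpow_div_rpow_mul_add_rpow hφp hMp, hp]
  field_simp

/-- Abstract form of Lemma 4.5 (third conclusion): under the same hypotheses,
`m(p) = M(p)^(p−l)/(2·φ(p)^(p−1)·e^(α·M(p)^s))` converges to
`(λ·D^(q−1) + β·D^(a−1))·D^(1−l)·e^(−α·D^s)` as `p → +∞`. -/
theorem stmt_9 (q a b lam β D l α s : ℝ) (hq : 1 ≤ q) (ha : 1 ≤ a) (hb : 0 < b)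
    (hlam : 0 < lam) (hβ : 0 < β) (hD : 0 < D) (hl : 1 ≤ l)
    (hα : 0 ≤ α) (hs : 0 ≤ s) (hr : q ≤ a + b)
    (φ k M : ℝ → ℝ)
    (hEq : ∀ᶠ p in Filter.atTop, 0 < φ p ∧ 0 < k p ∧ 0 < M p ∧
      lam * (φ p) ^ (q - 1) * (φ p / M p) ^ (p - q) +
        β * (φ p) ^ (a - 1) * (k p) ^ b * (φ p / M p) ^ (p - (a + b)) = 1 / 2)
    (hφ : Filter.Tendsto φ Filter.atTop (nhds D))
    (hk : Filter.Tendsto k Filter.atTop (nhds 1)) :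
    Filter.Tendsto
      (fun p => M p ^ (p - l) / (2 * φ p ^ (p - 1) * Real.exp (α * M p ^ s)))
      Filter.atTop
      (nhds ((lam * D ^ (q - 1) + β * D ^ (a - 1)) * D ^ (1 - l) *
        Real.exp (-(α * D ^ s)))) :=
  stmt_9_general q a b lam β D l α s hlam hβ hD hr φ k M hEq hφ hk
end
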